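/- arXiv:2401.00539 — 3 statements merged into one kernel-verified Lean document; each statement's English description precedes it below -/
import Mathlib

section
/- For all τ > 0, x, k ∈ ℝ and σ > 0, the vega of the Inverse call satisfies ∂_σ BS(τ,x,k,σ) = √τ · φ(d₂) − 2στ · e^{σ²τ + k − x} N(d₁), where d₂ = (x−k)/(σ√τ) − σ√τ/2 and d₁ = d₂ − σ√τ. -/
open Real MeasureTheory Set Filter

/-- Standard normal CDF `N(z) = (2π)^{-1/2} ∫_{-∞}^z e^{-t²/2} dt`. -/
noncomputable def Ncdf (z : ℝ) : ℝ :=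
  (Real.sqrt (2 * Real.pi))⁻¹ * ∫ t in Set.Iic z, Real.exp (-t ^ 2 / 2)

/-- Standard normal density `φ(z) = (2π)^{-1/2} e^{-z²/2}`. -/
noncomputable def phi (z : ℝ) : ℝ :=
  (Real.sqrt (2 * Real.pi))⁻¹ * Real.exp (-z ^ 2 / 2)

/-- `d₂ = (x-k)/(σ√τ) - σ√τ/2`. -/
noncomputable def d2 (τ x k σ : ℝ) : ℝ :=
  (x - k) / (σ * Real.sqrt τ) - σ * Real.sqrt τ / 2

/-- `d₁ = d₂ - σ√τ`. -/
noncomputable def d1 (τ x k σ : ℝ) : ℝ :=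
  d2 τ x k σ - σ * Real.sqrt τ

/-- Black–Scholes price of an Inverse European call:
`BS(τ,x,k,σ) = N(d₂) - e^{σ²τ + k - x} N(d₁)`. -/
noncomputable def BS (τ x k σ : ℝ) : ℝ :=
  Ncdf (d2 τ x k σ) - Real.exp (σ ^ 2 * τ + k - x) * Ncdf (d1 τ x k σ)

/-- Complementary error function `Erfc(z) = (2/√π) ∫_z^∞ e^{-t²} dt`. -/
noncomputable def Erfc (z : ℝ) : ℝ :=
  2 / Real.sqrt Real.pi * ∫ t in Set.Ioi z, Real.exp (-t ^ 2)

/-- `H(τ,x,k,σ) = ½ (∂³ₓₓₓ BS - ∂²ₓₓ BS)(τ,x,k,σ)`. -/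
noncomputable def Hfun (τ x k σ : ℝ) : ℝ :=
  (1 / 2) * (iteratedDeriv 3 (fun x' => BS τ x' k σ) x
    - iteratedDeriv 2 (fun x' => BS τ x' k σ) x)

/-- `G(τ,x,k,σ) = ∂ₖ H(τ,x,k,σ) - H(τ,x,k,σ)`. -/
noncomputable def Gfun (τ x k σ : ℝ) : ℝ :=
  deriv (fun k' => Hfun τ x k' σ) k - Hfun τ x k σ

lemma integrable_gauss : MeasureTheory.Integrable (fun t : ℝ => Real.exp (-t ^ 2 / 2)) := by
  have h := integrable_exp_neg_mul_sq (show (0:ℝ) < 1/2 by norm_num)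
  convert h using 2 with t
  ring_nf

lemma hasDerivAt_Ncdf (z : ℝ) : HasDerivAt Ncdf (phi z) z := by
  have hint := integrable_gauss
  have key : ∀ u : ℝ, Ncdf u = (Real.sqrt (2*Real.pi))⁻¹ *
      ((∫ t in Set.Iic (0:ℝ), Real.exp (-t^2/2)) + ∫ t in (0:ℝ)..u, Real.exp (-t^2/2)) := by
    intro u
    rw [Ncdf]
    congr 1
    rw [← intervalIntegral.integral_Iic_sub_Iic hint.integrableOn hint.integrableOn]
    ring
  have hcont : Continuous (fun t : ℝ => Real.exp (-t^2/2)) := by continuity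
  have h1 : HasDerivAt (fun u : ℝ => ∫ t in (0:ℝ)..u, Real.exp (-t^2/2)) (Real.exp (-z^2/2)) z :=
    intervalIntegral.integral_hasDerivAt_right hint.intervalIntegrable
      (hcont.stronglyMeasurableAtFilter _ _) hcont.continuousAt
  have h2 := ((h1.const_add (∫ t in Set.Iic (0:ℝ), Real.exp (-t^2/2))).const_mul
      (Real.sqrt (2*Real.pi))⁻¹)
  have hfun : Ncdf = fun u => (Real.sqrt (2*Real.pi))⁻¹ *
      ((∫ t in Set.Iic (0:ℝ), Real.exp (-t^2/2)) + ∫ t in (0:ℝ)..u, Real.exp (-t^2/2)) :=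
    funext key
  rw [phi, hfun]
  exact h2

lemma exp_phi (τ x k σ : ℝ) (hτ : 0 < τ) (hσ : 0 < σ) :
    Real.exp (σ ^ 2 * τ + k - x) * phi (d1 τ x k σ) = phi (d2 τ x k σ) := by
  have hs : 0 < Real.sqrt τ := Real.sqrt_pos.2 hτ
  have hst : σ * Real.sqrt τ ≠ 0 := by positivity
  have h2 : Real.sqrt τ ^ 2 = τ := Real.sq_sqrt hτ.le
  unfold phi d1 d2
  rw [mul_left_comm, ← Real.exp_add]
  congr 2
  set s := Real.sqrt τ with hsdef
  rw [show τ = s ^ 2 from h2.symm]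
  field_simp
  ring

/-- vega of the Inverse call. -/
theorem stmt_2 (τ x k σ : ℝ) (hτ : 0 < τ) (hσ : 0 < σ) :
    deriv (fun σ' => BS τ x k σ') σ
      = Real.sqrt τ * phi (d2 τ x k σ)
        - 2 * σ * τ * Real.exp (σ ^ 2 * τ + k - x) * Ncdf (d1 τ x k σ) := by
  have hs : 0 < Real.sqrt τ := Real.sqrt_pos.2 hτ
  have hst : σ * Real.sqrt τ ≠ 0 := by positivity
  have hmul : HasDerivAt (fun σ' : ℝ => σ' * Real.sqrt τ) (Real.sqrt τ) σ := by
    simpa using (hasDerivAt_id σ).mul_const (Real.sqrt τ)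
  set D2 : ℝ := (0 * (σ * Real.sqrt τ) - (x - k) * Real.sqrt τ) / (σ * Real.sqrt τ) ^ 2
      - Real.sqrt τ / 2 with hD2
  have hd2 : HasDerivAt (fun σ' => d2 τ x k σ') D2 σ := by
    unfold d2
    exact ((hasDerivAt_const σ (x - k)).div hmul hst).sub (hmul.div_const 2)
  have hd1 : HasDerivAt (fun σ' => d1 τ x k σ') (D2 - Real.sqrt τ) σ := by
    unfold d1
    exact hd2.sub hmul
  have hN2 : HasDerivAt (fun σ' => Ncdf (d2 τ x k σ')) (phi (d2 τ x k σ) * D2) σ :=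
    (hasDerivAt_Ncdf _).comp σ hd2
  have hN1 : HasDerivAt (fun σ' => Ncdf (d1 τ x k σ'))
      (phi (d1 τ x k σ) * (D2 - Real.sqrt τ)) σ :=
    (hasDerivAt_Ncdf _).comp σ hd1
  have hinner : HasDerivAt (fun σ' : ℝ => σ' ^ 2 * τ + k - x) (2 * σ * τ) σ := by
    have := (((hasDerivAt_pow 2 σ).mul_const τ).add_const k).sub_const x
    refine this.congr_deriv ?_
    ring
  have he : HasDerivAt (fun σ' : ℝ => Real.exp (σ' ^ 2 * τ + k - x))
      (Real.exp (σ ^ 2 * τ + k - x) * (2 * σ * τ)) σ := hinner.exp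
  have hBS : HasDerivAt (fun σ' => BS τ x k σ')
      (phi (d2 τ x k σ) * D2
        - (Real.exp (σ ^ 2 * τ + k - x) * (2 * σ * τ) * Ncdf (d1 τ x k σ)
          + Real.exp (σ ^ 2 * τ + k - x) * (phi (d1 τ x k σ) * (D2 - Real.sqrt τ)))) σ := by
    unfold BS
    exact hN2.sub (he.mul hN1)
  rw [hBS.deriv, ← exp_phi τ x k σ hτ hσ]
  ring
end

section
/- The Inverse-option Black–Scholes function satisfies the Black–Scholes partial differential equation in calendar time: for every fixed maturity T, for all t < T, x, k ∈ ℝ and σ > 0, writing BS as a function of t via τ = T − t, one has ∂_t BS(t,x,k,σ) − (σ²/2) ∂_x BS(t,x,k,σ) + (σ²/2) ∂²_{xx} BS(t,x,k,σ) = 0; equivalently, in the time-to-maturity variable, ∂_τ BS(τ,x,k,σ) = (σ²/2)(∂²_{xx} BS − ∂_x BS)(τ,x,k,σ) for all τ > 0. -/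
open Real MeasureTheory Set Filter

lemma continuous_gauss : Continuous (fun t : ℝ => Real.exp (-t ^ 2 / 2)) := by continuity

section lemmas

variable (τ x k σ : ℝ)

/-- Key identity: `e^{σ²τ+k-x} φ(d₁) = φ(d₂)`. -/
lemma key (hτ : 0 < τ) (hσ : 0 < σ) :
    Real.exp (σ ^ 2 * τ + k - x) * phi (d1 τ x k σ) = phi (d2 τ x k σ) := by
  have hs : σ * Real.sqrt τ ≠ 0 := by positivity
  have hs2 : (σ * Real.sqrt τ) ^ 2 = σ ^ 2 * τ := by
    rw [mul_pow, Real.sq_sqrt hτ.le]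
  have hu : (x - k) / (σ * Real.sqrt τ) * (σ * Real.sqrt τ) = x - k :=
    div_mul_cancel₀ _ hs
  unfold phi d1 d2
  rw [mul_left_comm, ← Real.exp_add]
  congr 1
  set s := σ * Real.sqrt τ
  set u := (x - k) / s
  rw [Real.exp_eq_exp]
  linear_combination hu - hs2

lemma hasDerivAt_d2_x (hτ : 0 < τ) :
    HasDerivAt (fun x' => d2 τ x' k σ) (1 / (σ * Real.sqrt τ)) x := by
  have : HasDerivAt (fun x' => (x' - k) / (σ * Real.sqrt τ) - σ * Real.sqrt τ / 2)
      (1 / (σ * Real.sqrt τ)) x :=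
    (((hasDerivAt_id x).sub_const k).div_const _).sub_const _
  exact this

lemma hasDerivAt_d1_x (hτ : 0 < τ) :
    HasDerivAt (fun x' => d1 τ x' k σ) (1 / (σ * Real.sqrt τ)) x :=
  (hasDerivAt_d2_x τ x k σ hτ).sub_const _

lemma hasDerivAt_exp_x :
    HasDerivAt (fun x' => Real.exp (σ ^ 2 * τ + k - x'))
      (-Real.exp (σ ^ 2 * τ + k - x)) x := by
  have h : HasDerivAt (fun x' : ℝ => σ ^ 2 * τ + k - x') (-1) x :=
    (hasDerivAt_id x).const_sub _
  simpa using h.exp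

lemma hasDerivAt_BS_x (hτ : 0 < τ) (hσ : 0 < σ) :
    HasDerivAt (fun x' => BS τ x' k σ)
      (Real.exp (σ ^ 2 * τ + k - x) * Ncdf (d1 τ x k σ)) x := by
  have hs : σ * Real.sqrt τ ≠ 0 := by positivity
  have hN2 : HasDerivAt (fun x' => Ncdf (d2 τ x' k σ))
      (phi (d2 τ x k σ) * (1 / (σ * Real.sqrt τ))) x :=
    (hasDerivAt_Ncdf _).comp x (hasDerivAt_d2_x τ x k σ hτ)
  have hN1 : HasDerivAt (fun x' => Ncdf (d1 τ x' k σ))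
      (phi (d1 τ x k σ) * (1 / (σ * Real.sqrt τ))) x :=
    (hasDerivAt_Ncdf _).comp x (hasDerivAt_d1_x τ x k σ hτ)
  have htot := hN2.sub ((hasDerivAt_exp_x τ x k σ).mul hN1)
  refine htot.congr_deriv (Eq.symm ?_)
  have hk := key τ x k σ hτ hσ
  field_simp
  linarith [hk]

lemma deriv_BS_x (hτ : 0 < τ) (hσ : 0 < σ) :
    deriv (fun x' => BS τ x' k σ) x
      = Real.exp (σ ^ 2 * τ + k - x) * Ncdf (d1 τ x k σ) :=
  (hasDerivAt_BS_x τ x k σ hτ hσ).deriv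

lemma deriv2_BS_x (hτ : 0 < τ) (hσ : 0 < σ) :
    iteratedDeriv 2 (fun x' => BS τ x' k σ) x
      = -(Real.exp (σ ^ 2 * τ + k - x) * Ncdf (d1 τ x k σ))
        + phi (d2 τ x k σ) / (σ * Real.sqrt τ) := by
  have hs : σ * Real.sqrt τ ≠ 0 := by positivity
  rw [iteratedDeriv_succ, iteratedDeriv_one]
  have hfun : deriv (fun x' => BS τ x' k σ)
      = fun x' => Real.exp (σ ^ 2 * τ + k - x') * Ncdf (d1 τ x' k σ) := by
    funext y; exact deriv_BS_x τ y k σ hτ hσ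
  rw [hfun]
  have hN1 : HasDerivAt (fun x' => Ncdf (d1 τ x' k σ))
      (phi (d1 τ x k σ) * (1 / (σ * Real.sqrt τ))) x :=
    (hasDerivAt_Ncdf _).comp x (hasDerivAt_d1_x τ x k σ hτ)
  have htot : HasDerivAt (fun x' => Real.exp (σ ^ 2 * τ + k - x') * Ncdf (d1 τ x' k σ)) _ x :=
    (hasDerivAt_exp_x τ x k σ).mul hN1
  rw [htot.deriv]
  have hk := key τ x k σ hτ hσ
  field_simp
  linarith [hk]

lemma hasDerivAt_sqrt' (hτ : 0 < τ) :
    HasDerivAt Real.sqrt (1 / (2 * Real.sqrt τ)) τ :=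
  Real.hasDerivAt_sqrt hτ.ne'

lemma hasDerivAt_d2_tau (hτ : 0 < τ) (hσ : 0 < σ) :
    HasDerivAt (fun τ' => d2 τ' x k σ)
      ((x - k) / σ * (-(1 / (2 * Real.sqrt τ)) / Real.sqrt τ ^ 2)
        - σ / 2 * (1 / (2 * Real.sqrt τ))) τ := by
  have hst : Real.sqrt τ ≠ 0 := by positivity
  have h1 : HasDerivAt (fun τ' => (x - k) / σ * (Real.sqrt τ')⁻¹)
      ((x - k) / σ * (-(1 / (2 * Real.sqrt τ)) / Real.sqrt τ ^ 2)) τ := by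
    exact ((hasDerivAt_sqrt' τ hτ).inv hst).const_mul _
  have h2 : HasDerivAt (fun τ' => σ / 2 * Real.sqrt τ')
      (σ / 2 * (1 / (2 * Real.sqrt τ))) τ := (hasDerivAt_sqrt' τ hτ).const_mul _
  have heq : (fun τ' => d2 τ' x k σ)
      = fun τ' => (x - k) / σ * (Real.sqrt τ')⁻¹ - σ / 2 * Real.sqrt τ' := by
    funext y; unfold d2; ring
  rw [heq]
  exact h1.sub h2

lemma hasDerivAt_d1_tau (hτ : 0 < τ) (hσ : 0 < σ) :
    HasDerivAt (fun τ' => d1 τ' x k σ)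
      ((x - k) / σ * (-(1 / (2 * Real.sqrt τ)) / Real.sqrt τ ^ 2)
        - σ / 2 * (1 / (2 * Real.sqrt τ)) - σ * (1 / (2 * Real.sqrt τ))) τ := by
  have h2 : HasDerivAt (fun τ' => σ * Real.sqrt τ')
      (σ * (1 / (2 * Real.sqrt τ))) τ := (hasDerivAt_sqrt' τ hτ).const_mul _
  exact (hasDerivAt_d2_tau τ x k σ hτ hσ).sub h2

lemma hasDerivAt_BS_tau (hτ : 0 < τ) (hσ : 0 < σ) :
    HasDerivAt (fun τ' => BS τ' x k σ)
      (phi (d2 τ x k σ) * (σ * (1 / (2 * Real.sqrt τ)))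
        - σ ^ 2 * (Real.exp (σ ^ 2 * τ + k - x) * Ncdf (d1 τ x k σ))) τ := by
  set D2' := (x - k) / σ * (-(1 / (2 * Real.sqrt τ)) / Real.sqrt τ ^ 2)
      - σ / 2 * (1 / (2 * Real.sqrt τ)) with hD2'
  have hA : HasDerivAt (fun τ' => Ncdf (d2 τ' x k σ)) (phi (d2 τ x k σ) * D2') τ :=
    (hasDerivAt_Ncdf _).comp τ (hasDerivAt_d2_tau τ x k σ hτ hσ)
  have hB : HasDerivAt (fun τ' => Ncdf (d1 τ' x k σ))
      (phi (d1 τ x k σ) * (D2' - σ * (1 / (2 * Real.sqrt τ)))) τ :=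
    (hasDerivAt_Ncdf _).comp τ (hasDerivAt_d1_tau τ x k σ hτ hσ)
  have hexp : HasDerivAt (fun τ' => Real.exp (σ ^ 2 * τ' + k - x))
      (Real.exp (σ ^ 2 * τ + k - x) * σ ^ 2) τ := by
    have h : HasDerivAt (fun τ' : ℝ => σ ^ 2 * τ' + k - x) (σ ^ 2) τ := by
      simpa using (((hasDerivAt_id τ).const_mul (σ ^ 2)).add_const k).sub_const x
    simpa using h.exp
  have htot := hA.sub (hexp.mul hB)
  refine htot.congr_deriv (Eq.symm ?_)
  have hk := key τ x k σ hτ hσ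
  linear_combination (D2' - σ * (1 / (2 * Real.sqrt τ))) * hk

end lemmas

/-- the Inverse-option Black–Scholes PDE. -/
theorem stmt_3 (x k σ : ℝ) (hσ : 0 < σ) :
    (∀ T t : ℝ, t < T →
      deriv (fun t' => BS (T - t') x k σ) t
        - σ ^ 2 / 2 * deriv (fun x' => BS (T - t) x' k σ) x
        + σ ^ 2 / 2 * iteratedDeriv 2 (fun x' => BS (T - t) x' k σ) x = 0) ∧
    (∀ τ : ℝ, 0 < τ →
      deriv (fun τ' => BS τ' x k σ) τ
        = σ ^ 2 / 2 * (iteratedDeriv 2 (fun x' => BS τ x' k σ) x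
            - deriv (fun x' => BS τ x' k σ) x)) := by
  have h2 : ∀ τ : ℝ, 0 < τ →
      deriv (fun τ' => BS τ' x k σ) τ
        = σ ^ 2 / 2 * (iteratedDeriv 2 (fun x' => BS τ x' k σ) x
            - deriv (fun x' => BS τ x' k σ) x) := by
    intro τ hτ
    have hst : Real.sqrt τ ≠ 0 := by positivity
    rw [(hasDerivAt_BS_tau τ x k σ hτ hσ).deriv, deriv2_BS_x τ x k σ hτ hσ,
      deriv_BS_x τ x k σ hτ hσ]
    field_simp
    ring
  refine ⟨?_, h2⟩
  intro T t ht
  have hτ : 0 < T - t := by linarith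
  have hchain : HasDerivAt (fun t' => BS (T - t') x k σ)
      ((phi (d2 (T - t) x k σ) * (σ * (1 / (2 * Real.sqrt (T - t))))
        - σ ^ 2 * (Real.exp (σ ^ 2 * (T - t) + k - x) * Ncdf (d1 (T - t) x k σ))) * (-1)) t :=
    (hasDerivAt_BS_tau (T - t) x k σ hτ hσ).comp t ((hasDerivAt_id t).const_sub T)
  rw [hchain.deriv]
  have := h2 (T - t) hτ
  rw [(hasDerivAt_BS_tau (T - t) x k σ hτ hσ).deriv] at this
  rw [deriv2_BS_x (T - t) x k σ hτ hσ, deriv_BS_x (T - t) x k σ hτ hσ] at this ⊢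
  linarith [this]
end

section
/- Pointwise bound on third-order derivatives of G: for any constants 0 < c₁ ≤ c₂ there exists C > 0 (depending only on c₁ and c₂) such that for all τ ∈ (0,1], x, k ∈ ℝ and σ ∈ [c₁, c₂], |(∂³_{xxx} − ∂²_{xx}) G(τ,x,k,σ)| ≤ C τ^{−3}. -/
open Real MeasureTheory Set Filter

/- ### Auxiliary development -/

namespace S17

lemma integrable_gauss : Integrable (fun t : ℝ => Real.exp (-t ^ 2 / 2)) := by
  have h := integrable_exp_neg_mul_sq (b := (1/2 : ℝ)) (by norm_num)
  convert h using 2 with t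
  ring_nf

lemma hasDerivAt_phi (z : ℝ) : HasDerivAt phi (-z * phi z) z := by
  unfold phi
  have h1 : HasDerivAt (fun z : ℝ => -z ^ 2 / 2) (-z) z := by
    have := ((hasDerivAt_pow 2 z).neg).div_const 2
    refine this.congr_deriv (Eq.symm ?_); push_cast; ring
  have h2 := (h1.exp).const_mul (Real.sqrt (2 * Real.pi))⁻¹
  refine h2.congr_deriv (Eq.symm ?_)
  ring

lemma hasDerivAt_Ncdf (z : ℝ) : HasDerivAt Ncdf (phi z) z := by
  have hcont : Continuous (fun t : ℝ => Real.exp (-t ^ 2 / 2)) := by continuity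
  have key : ∀ w : ℝ, (∫ t in Set.Iic w, Real.exp (-t ^ 2 / 2)) =
      (∫ t in Set.Iic (0:ℝ), Real.exp (-t ^ 2 / 2)) + ∫ t in (0:ℝ)..w, Real.exp (-t ^ 2 / 2) := by
    intro w
    have := intervalIntegral.integral_Iic_sub_Iic (μ := volume)
      (f := fun t : ℝ => Real.exp (-t ^ 2 / 2)) (integrable_gauss.integrableOn)
      (integrable_gauss.integrableOn) (a := 0) (b := w)
    linarith [this]
  have h1 : HasDerivAt (fun w => ∫ t in (0:ℝ)..w, Real.exp (-t ^ 2 / 2))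
      (Real.exp (-z ^ 2 / 2)) z := (hcont.integral_hasStrictDerivAt 0 z).hasDerivAt
  have h2 : HasDerivAt (fun w : ℝ => (Real.sqrt (2 * Real.pi))⁻¹ *
      ((∫ t in Set.Iic (0:ℝ), Real.exp (-t ^ 2 / 2)) + ∫ t in (0:ℝ)..w, Real.exp (-t ^ 2 / 2)))
      ((Real.sqrt (2 * Real.pi))⁻¹ * Real.exp (-z ^ 2 / 2)) z :=
    ((h1.const_add _).const_mul _)
  have : Ncdf = fun w : ℝ => (Real.sqrt (2 * Real.pi))⁻¹ *
      ((∫ t in Set.Iic (0:ℝ), Real.exp (-t ^ 2 / 2)) + ∫ t in (0:ℝ)..w, Real.exp (-t ^ 2 / 2)) := by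
    funext w; rw [Ncdf, key w]
  rw [this, phi]
  exact h2

noncomputable section

/-- `L = d₁` expressed via `s = σ√τ`. -/
def Lf (s k x : ℝ) : ℝ := (x - k) / s - 3 * s / 2
def Ef (s k x : ℝ) : ℝ := Real.exp (s ^ 2 + k - x)
def Ff (s k : ℝ) (Q : ℝ → ℝ) (x : ℝ) : ℝ := Ef s k x * (phi (Lf s k x) * Q (Lf s k x))
def Wf (s k x : ℝ) : ℝ := Ef s k x * Ncdf (Lf s k x)

lemma Ff_congr {Q1 Q2 : ℝ → ℝ} (h : ∀ w, Q1 w = Q2 w) (s k x : ℝ) :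
    Ff s k Q1 x = Ff s k Q2 x := by unfold Ff; rw [h]

lemma Ephi (s k x : ℝ) (hs : 0 < s) : Ef s k x * phi (Lf s k x) = phi (Lf s k x + s) := by
  unfold Ef phi Lf
  rw [mul_comm, mul_assoc, ← Real.exp_add]
  congr 2
  field_simp
  ring

lemma hasDerivAt_L (s k x : ℝ) : HasDerivAt (fun x' => Lf s k x') s⁻¹ x := by
  have h := (((hasDerivAt_id x).sub_const k).div_const s).sub_const (3 * s / 2)
  simpa [Lf, one_div] using h

lemma hasDerivAt_Lk (s k x : ℝ) : HasDerivAt (fun k' => Lf s k' x) (-s⁻¹) k := by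
  have h := (((hasDerivAt_id k).const_sub x).div_const s).sub_const (3 * s / 2)
  have : -(1:ℝ) / s = -s⁻¹ := by field_simp
  simpa [Lf, this] using h

lemma hasDerivAt_E (s k x : ℝ) : HasDerivAt (fun x' => Ef s k x') (-(Ef s k x)) x := by
  have h := (((hasDerivAt_id x).const_sub (s ^ 2 + k))).exp
  simpa [Ef] using h

lemma hasDerivAt_Ek (s k x : ℝ) : HasDerivAt (fun k' => Ef s k' x) (Ef s k x) k := by
  have h0 : HasDerivAt (fun k' : ℝ => s ^ 2 + k' - x) 1 k := by
    simpa using ((hasDerivAt_id k).const_add (s ^ 2)).sub_const x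
  have h := h0.exp
  simpa [Ef] using h

lemma hasDerivAt_F (s k : ℝ) (hs : 0 < s) (Q Q' : ℝ → ℝ)
    (hQ : ∀ z, HasDerivAt Q (Q' z) z) (x : ℝ) :
    HasDerivAt (Ff s k Q)
      (Ff s k (fun z => -Q z - z * Q z * s⁻¹ + Q' z * s⁻¹) x) x := by
  have hphi := (hasDerivAt_phi (Lf s k x)).comp x (hasDerivAt_L s k x)
  have hq := (hQ (Lf s k x)).comp x (hasDerivAt_L s k x)
  have h := (hasDerivAt_E s k x).mul (hphi.mul hq)
  refine h.congr_deriv (Eq.symm ?_)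
  unfold Ff
  simp only [Function.comp_apply, Pi.mul_apply]
  ring

lemma hasDerivAt_W (s k : ℝ) (hs : 0 < s) (x : ℝ) :
    HasDerivAt (fun x' => Wf s k x') (-Wf s k x + Ff s k (fun _ => s⁻¹) x) x := by
  have hN := (hasDerivAt_Ncdf (Lf s k x)).comp x (hasDerivAt_L s k x)
  have h := (hasDerivAt_E s k x).mul hN
  refine h.congr_deriv (Eq.symm ?_)
  unfold Wf Ff
  simp only [Function.comp_apply]
  ring

/- polynomial derivative helpers -/

lemma hd2 (a0 a1 a2 z : ℝ) :
    HasDerivAt (fun z : ℝ => a0 + a1 * z + a2 * z ^ 2) (a1 + 2 * a2 * z) z := by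
  have h := ((hasDerivAt_const z a0).add ((hasDerivAt_id z).const_mul a1)).add
      ((hasDerivAt_pow 2 z).const_mul a2)
  refine h.congr_deriv (Eq.symm ?_)
  push_cast; ring

lemma hd3 (a0 a1 a2 a3 z : ℝ) :
    HasDerivAt (fun z : ℝ => a0 + a1 * z + a2 * z ^ 2 + a3 * z ^ 3)
      (a1 + 2 * a2 * z + 3 * a3 * z ^ 2) z := by
  have h := (((hasDerivAt_const z a0).add ((hasDerivAt_id z).const_mul a1)).add
      ((hasDerivAt_pow 2 z).const_mul a2)).add ((hasDerivAt_pow 3 z).const_mul a3)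
  refine h.congr_deriv (Eq.symm ?_)
  push_cast; ring

lemma hd4 (a0 a1 a2 a3 a4 z : ℝ) :
    HasDerivAt (fun z : ℝ => a0 + a1 * z + a2 * z ^ 2 + a3 * z ^ 3 + a4 * z ^ 4)
      (a1 + 2 * a2 * z + 3 * a3 * z ^ 2 + 4 * a4 * z ^ 3) z := by
  have h := ((((hasDerivAt_const z a0).add ((hasDerivAt_id z).const_mul a1)).add
      ((hasDerivAt_pow 2 z).const_mul a2)).add ((hasDerivAt_pow 3 z).const_mul a3)).add
      ((hasDerivAt_pow 4 z).const_mul a4)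
  refine h.congr_deriv (Eq.symm ?_)
  push_cast; ring

/- the explicit polynomials -/

def pH (u z : ℝ) : ℝ := (-(3/2) * u) + (-(1/2) * u ^ 2) * z
def pG (u z : ℝ) : ℝ := (-u + 1/2 * u ^ 3) + (-(3/2) * u ^ 2) * z + (-(1/2) * u ^ 3) * z ^ 2
def p2 (u z : ℝ) : ℝ := (u - 2 * u ^ 3) + (5/2 * u ^ 2 - 3/2 * u ^ 4) * z
  + (2 * u ^ 3) * z ^ 2 + (1/2 * u ^ 4) * z ^ 3
def p3 (u z : ℝ) : ℝ := (-u + 9/2 * u ^ 3 - 3/2 * u ^ 5) + (-(7/2) * u ^ 2 + 15/2 * u ^ 4) * z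
  + (-(9/2) * u ^ 3 + 3 * u ^ 5) * z ^ 2 + (-(5/2) * u ^ 4) * z ^ 3 + (-(1/2) * u ^ 5) * z ^ 4
def p4 (u z : ℝ) : ℝ := (u - 8 * u ^ 3 + 9 * u ^ 5)
  + (9/2 * u ^ 2 - 21 * u ^ 4 + 15/2 * u ^ 6) * z + (8 * u ^ 3 - 18 * u ^ 5) * z ^ 2
  + (7 * u ^ 4 - 5 * u ^ 6) * z ^ 3 + (3 * u ^ 5) * z ^ 4 + (1/2 * u ^ 6) * z ^ 5

lemma hd_pG (u z : ℝ) : HasDerivAt (pG u) ((-(3/2) * u ^ 2) + 2 * (-(1/2) * u ^ 3) * z) z := by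
  unfold pG; exact hd2 _ _ _ z

lemma hd_p2 (u z : ℝ) : HasDerivAt (p2 u)
    ((5/2 * u ^ 2 - 3/2 * u ^ 4) + 2 * (2 * u ^ 3) * z + 3 * (1/2 * u ^ 4) * z ^ 2) z := by
  unfold p2; exact hd3 _ _ _ _ z

lemma hd_p3 (u z : ℝ) : HasDerivAt (p3 u)
    ((-(7/2) * u ^ 2 + 15/2 * u ^ 4) + 2 * (-(9/2) * u ^ 3 + 3 * u ^ 5) * z
      + 3 * (-(5/2) * u ^ 4) * z ^ 2 + 4 * (-(1/2) * u ^ 5) * z ^ 3) z := by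
  unfold p3; exact hd4 _ _ _ _ _ z

lemma hd_pH (u z : ℝ) : HasDerivAt (pH u) (-(1/2) * u ^ 2) z := by
  unfold pH
  have h := (hasDerivAt_const z (-(3/2) * u)).add ((hasDerivAt_id z).const_mul (-(1/2) * u ^ 2))
  refine h.congr_deriv (Eq.symm ?_); ring

/- the derivative chain for `BS`, `H`, `G` -/

variable {τ k σ : ℝ}

lemma s_pos (hτ : 0 < τ) (hσ : 0 < σ) : 0 < σ * Real.sqrt τ :=
  mul_pos hσ (Real.sqrt_pos.2 hτ)

lemma sq_s (hτ : 0 < τ) : (σ * Real.sqrt τ) ^ 2 = σ ^ 2 * τ := by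
  rw [mul_pow, Real.sq_sqrt hτ.le]

lemma BS_eq (hτ : 0 < τ) (x : ℝ) :
    BS τ x k σ = Ncdf (Lf (σ * Real.sqrt τ) k x + σ * Real.sqrt τ) - Wf (σ * Real.sqrt τ) k x := by
  unfold BS Wf Ef Lf d1 d2
  rw [sq_s hτ]
  ring_nf

lemma hasDerivAt_BSx (hτ : 0 < τ) (hσ : 0 < σ) (x : ℝ) :
    HasDerivAt (fun x' => BS τ x' k σ) (Wf (σ * Real.sqrt τ) k x) x := by
  set s := σ * Real.sqrt τ with hsdef
  have hs : 0 < s := s_pos hτ hσ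
  have hrw : (fun x' => BS τ x' k σ) = fun x' => Ncdf (Lf s k x' + s) - Wf s k x' :=
    funext fun x' => BS_eq hτ x'
  rw [hrw]
  have h1 := (hasDerivAt_Ncdf (Lf s k x + s)).comp x ((hasDerivAt_L s k x).add_const s)
  have h := h1.sub (hasDerivAt_W s k hs x)
  refine h.congr_deriv (Eq.symm ?_)
  rw [← Ephi s k x hs]
  unfold Ff
  simp only [Function.comp_apply]
  ring

lemma BS1 (hτ : 0 < τ) (hσ : 0 < σ) :
    deriv (fun x' => BS τ x' k σ) = fun x => Wf (σ * Real.sqrt τ) k x :=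
  funext fun x => (hasDerivAt_BSx hτ hσ x).deriv

lemma BS2 (hτ : 0 < τ) (hσ : 0 < σ) :
    iteratedDeriv 2 (fun x' => BS τ x' k σ)
      = fun x => -Wf (σ * Real.sqrt τ) k x
        + Ff (σ * Real.sqrt τ) k (fun _ => (σ * Real.sqrt τ)⁻¹) x := by
  have hs : 0 < σ * Real.sqrt τ := s_pos hτ hσ
  rw [show (2 : ℕ) = 1 + 1 from rfl, iteratedDeriv_succ, iteratedDeriv_one, BS1 hτ hσ]
  exact funext fun x => (hasDerivAt_W _ k hs x).deriv

lemma BS3 (hτ : 0 < τ) (hσ : 0 < σ) :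
    iteratedDeriv 3 (fun x' => BS τ x' k σ)
      = fun x => Wf (σ * Real.sqrt τ) k x - Ff (σ * Real.sqrt τ) k (fun _ => (σ * Real.sqrt τ)⁻¹) x
        + Ff (σ * Real.sqrt τ) k
            (fun z => -(σ * Real.sqrt τ)⁻¹ - (σ * Real.sqrt τ)⁻¹ ^ 2 * z) x := by
  set s := σ * Real.sqrt τ with hsdef
  have hs : 0 < s := s_pos hτ hσ
  rw [show (3 : ℕ) = 2 + 1 from rfl, iteratedDeriv_succ, BS2 hτ hσ]
  funext x
  have hF := hasDerivAt_F s k hs (fun _ => s⁻¹) (fun _ => 0) (fun z => hasDerivAt_const z _) x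
  have h := ((hasDerivAt_W s k hs x).neg).add hF
  rw [HasDerivAt.deriv (f := fun x => -Wf (σ * Real.sqrt τ) k x + Ff (σ * Real.sqrt τ) k (fun _ => (σ * Real.sqrt τ)⁻¹) x) h]
  have := Ff_congr (Q1 := fun z => -(fun _ : ℝ => s⁻¹) z - z * (fun _ : ℝ => s⁻¹) z * s⁻¹
      + (fun _ : ℝ => 0) z * s⁻¹) (Q2 := fun z => -s⁻¹ - s⁻¹ ^ 2 * z)
      (fun w => by ring) s k x
  rw [this]
  ring

lemma H_eq (hτ : 0 < τ) (hσ : 0 < σ) (x : ℝ) :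
    Hfun τ x k σ = Wf (σ * Real.sqrt τ) k x
      + Ff (σ * Real.sqrt τ) k (pH (σ * Real.sqrt τ)⁻¹) x := by
  unfold Hfun
  rw [BS2 hτ hσ, BS3 hτ hσ]
  unfold Ff pH
  ring

lemma hasDerivAt_Hk (hτ : 0 < τ) (hσ : 0 < σ) (x : ℝ) :
    HasDerivAt (fun k' => Hfun τ x k' σ)
      (Hfun τ x k σ + Ff (σ * Real.sqrt τ) k (pG (σ * Real.sqrt τ)⁻¹) x) k := by
  set s := σ * Real.sqrt τ with hsdef
  have hs : 0 < s := s_pos hτ hσ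
  have hrw : (fun k' => Hfun τ x k' σ)
      = fun k' => Wf s k' x + Ff s k' (pH s⁻¹) x := funext fun k' => H_eq hτ hσ x
  rw [hrw]
  have hN := (hasDerivAt_Ncdf (Lf s k x)).comp k (hasDerivAt_Lk s k x)
  have hphi := (hasDerivAt_phi (Lf s k x)).comp k (hasDerivAt_Lk s k x)
  have hp := (hd_pH s⁻¹ (Lf s k x)).comp k (hasDerivAt_Lk s k x)
  have h := ((hasDerivAt_Ek s k x).mul hN).add
    ((hasDerivAt_Ek s k x).mul (hphi.mul hp))
  refine h.congr_deriv (Eq.symm ?_)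
  rw [H_eq hτ hσ x, ← hsdef]
  unfold Wf Ff pH pG
  simp only [Function.comp_apply, Pi.mul_apply]
  have hss : s ≠ 0 := hs.ne'
  field_simp
  ring

lemma G_eq (hτ : 0 < τ) (hσ : 0 < σ) (x : ℝ) :
    Gfun τ x k σ = Ff (σ * Real.sqrt τ) k (pG (σ * Real.sqrt τ)⁻¹) x := by
  unfold Gfun
  rw [(hasDerivAt_Hk hτ hσ x).deriv]
  ring

lemma G1 (hτ : 0 < τ) (hσ : 0 < σ) :
    deriv (fun x' => Gfun τ x' k σ)
      = fun x => Ff (σ * Real.sqrt τ) k (p2 (σ * Real.sqrt τ)⁻¹) x := by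
  set s := σ * Real.sqrt τ with hsdef
  have hs : 0 < s := s_pos hτ hσ
  have hrw : (fun x' => Gfun τ x' k σ) = Ff s k (pG s⁻¹) :=
    funext fun x' => G_eq hτ hσ x'
  rw [hrw]
  funext x
  rw [(hasDerivAt_F s k hs _ _ (hd_pG s⁻¹) x).deriv]
  exact Ff_congr (fun w => by unfold pG p2; ring) s k x

lemma G2 (hτ : 0 < τ) (hσ : 0 < σ) :
    iteratedDeriv 2 (fun x' => Gfun τ x' k σ)
      = fun x => Ff (σ * Real.sqrt τ) k (p3 (σ * Real.sqrt τ)⁻¹) x := by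
  set s := σ * Real.sqrt τ with hsdef
  have hs : 0 < s := s_pos hτ hσ
  rw [show (2 : ℕ) = 1 + 1 from rfl, iteratedDeriv_succ, iteratedDeriv_one, G1 hτ hσ]
  funext x
  rw [show (fun x => Ff s k (p2 s⁻¹) x) = Ff s k (p2 s⁻¹) from rfl,
    (hasDerivAt_F s k hs _ _ (hd_p2 s⁻¹) x).deriv]
  exact Ff_congr (fun w => by unfold p2 p3; ring) s k x

lemma G3 (hτ : 0 < τ) (hσ : 0 < σ) :
    iteratedDeriv 3 (fun x' => Gfun τ x' k σ)
      = fun x => Ff (σ * Real.sqrt τ) k (p4 (σ * Real.sqrt τ)⁻¹) x := by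
  set s := σ * Real.sqrt τ with hsdef
  have hs : 0 < s := s_pos hτ hσ
  rw [show (3 : ℕ) = 2 + 1 from rfl, iteratedDeriv_succ, G2 hτ hσ]
  funext x
  rw [show (fun x => Ff s k (p3 s⁻¹) x) = Ff s k (p3 s⁻¹) from rfl,
    (hasDerivAt_F s k hs _ _ (hd_p3 s⁻¹) x).deriv]
  exact Ff_congr (fun w => by unfold p3 p4; ring) s k x

/- bounds -/

lemma pow_le_aux {a : ℝ} (ha : 0 ≤ a) {i : ℕ} (hi : i ≤ 6) : a ^ i ≤ 1 + a ^ 6 := by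
  rcases le_or_gt a 1 with h | h
  · have h1 := pow_le_one₀ ha h (n := i)
    have h6 : (0:ℝ) ≤ a ^ 6 := pow_nonneg ha 6
    linarith
  · have h1 : a ^ i ≤ a ^ 6 := pow_le_pow_right₀ h.le hi
    linarith

lemma mono_bound (u z : ℝ) (hu : 0 ≤ u) (i j : ℕ) (hi : i ≤ 6) (hj : j ≤ 6) :
    |u ^ j * z ^ i| ≤ (1 + u ^ 6) * (1 + z ^ 6) := by
  rw [abs_mul, abs_pow, abs_pow, abs_of_nonneg hu]
  have h1 : u ^ j ≤ 1 + u ^ 6 := pow_le_aux hu hj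
  have h2 : |z| ^ i ≤ 1 + |z| ^ 6 := pow_le_aux (abs_nonneg z) hi
  have h3 : |z| ^ 6 = z ^ 6 := by
    rw [← abs_pow]; exact abs_of_nonneg (by positivity)
  rw [h3] at h2
  have h4 : (0:ℝ) ≤ |z| ^ i := pow_nonneg (abs_nonneg z) i
  calc u ^ j * |z| ^ i ≤ (1 + u ^ 6) * |z| ^ i := mul_le_mul_of_nonneg_right h1 h4
    _ ≤ (1 + u ^ 6) * (1 + z ^ 6) := by
        apply mul_le_mul_of_nonneg_left h2
        nlinarith [pow_nonneg hu 6]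

lemma R_bound {u z : ℝ} (hu : 0 ≤ u) :
    |p4 u z - p3 u z| ≤ 121 * ((1 + u ^ 6) * (1 + z ^ 6)) := by
  have hre : p4 u z - p3 u z =
      2 * (u ^ 1 * z ^ 0) - 25/2 * (u ^ 3 * z ^ 0) + 21/2 * (u ^ 5 * z ^ 0)
      + 8 * (u ^ 2 * z ^ 1) - 57/2 * (u ^ 4 * z ^ 1) + 15/2 * (u ^ 6 * z ^ 1)
      + 25/2 * (u ^ 3 * z ^ 2) - 21 * (u ^ 5 * z ^ 2)
      + 19/2 * (u ^ 4 * z ^ 3) - 5 * (u ^ 6 * z ^ 3)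
      + 7/2 * (u ^ 5 * z ^ 4) + 1/2 * (u ^ 6 * z ^ 5) := by
    unfold p4 p3; ring
  have m01 := abs_le.mp (mono_bound u z hu 0 1 (by norm_num) (by norm_num))
  have m03 := abs_le.mp (mono_bound u z hu 0 3 (by norm_num) (by norm_num))
  have m05 := abs_le.mp (mono_bound u z hu 0 5 (by norm_num) (by norm_num))
  have m12 := abs_le.mp (mono_bound u z hu 1 2 (by norm_num) (by norm_num))
  have m14 := abs_le.mp (mono_bound u z hu 1 4 (by norm_num) (by norm_num))
  have m16 := abs_le.mp (mono_bound u z hu 1 6 (by norm_num) (by norm_num))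
  have m23 := abs_le.mp (mono_bound u z hu 2 3 (by norm_num) (by norm_num))
  have m25 := abs_le.mp (mono_bound u z hu 2 5 (by norm_num) (by norm_num))
  have m34 := abs_le.mp (mono_bound u z hu 3 4 (by norm_num) (by norm_num))
  have m36 := abs_le.mp (mono_bound u z hu 3 6 (by norm_num) (by norm_num))
  have m45 := abs_le.mp (mono_bound u z hu 4 5 (by norm_num) (by norm_num))
  have m56 := abs_le.mp (mono_bound u z hu 5 6 (by norm_num) (by norm_num))
  rw [hre, abs_le]
  constructor
  · linarith [m01.1, m01.2, m03.1, m03.2, m05.1, m05.2, m12.1, m12.2, m14.1, m14.2,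
      m16.1, m16.2, m23.1, m23.2, m25.1, m25.2, m34.1, m34.2, m36.1, m36.2,
      m45.1, m45.2, m56.1, m56.2]
  · linarith [m01.1, m01.2, m03.1, m03.2, m05.1, m05.2, m12.1, m12.2, m14.1, m14.2,
      m16.1, m16.2, m23.1, m23.2, m25.1, m25.2, m34.1, m34.2, m36.1, m36.2,
      m45.1, m45.2, m56.1, m56.2]

lemma mom (v : ℝ) : v ^ 6 * Real.exp (-v ^ 2 / 2) ≤ 216 := by
  set t : ℝ := v ^ 2 / 2 with ht
  have ht0 : 0 ≤ t := by positivity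
  have h1 : t / 3 + 1 ≤ Real.exp (t / 3) := Real.add_one_le_exp (t / 3)
  have h2 : (t / 3) ^ 3 ≤ Real.exp (t / 3) ^ 3 := by
    apply pow_le_pow_left₀ (by positivity)
    linarith
  have h3 : Real.exp (t / 3) ^ 3 = Real.exp t := by
    rw [← Real.exp_nat_mul]
    congr 1
    push_cast; ring
  have h4 : t ^ 3 ≤ 27 * Real.exp t := by
    rw [h3] at h2; nlinarith
  have h5 : v ^ 6 = 8 * t ^ 3 := by rw [ht]; ring
  have h6 : Real.exp (-v ^ 2 / 2) = Real.exp (-t) := by rw [ht]; ring_nf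
  have h7 : Real.exp (-t) * Real.exp t = 1 := by
    rw [← Real.exp_add]; simp
  have h8 : 0 < Real.exp (-t) := Real.exp_pos _
  calc v ^ 6 * Real.exp (-v ^ 2 / 2) = 8 * t ^ 3 * Real.exp (-t) := by rw [h5, h6]
    _ ≤ 8 * (27 * Real.exp t) * Real.exp (-t) := by
        apply mul_le_mul_of_nonneg_right _ h8.le
        nlinarith
    _ = 216 := by nlinarith [h7]

lemma phi_nonneg (v : ℝ) : 0 ≤ phi v := by unfold phi; positivity

lemma sqrt_two_pi_ge_one : (1:ℝ) ≤ Real.sqrt (2 * Real.pi) := by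
  rw [show (1:ℝ) = Real.sqrt 1 by simp]
  exact Real.sqrt_le_sqrt (by nlinarith [Real.pi_gt_three])

lemma phi_le_exp (v : ℝ) : phi v ≤ Real.exp (-v ^ 2 / 2) := by
  unfold phi
  have h1 : (Real.sqrt (2 * Real.pi))⁻¹ ≤ 1 := by
    rw [inv_le_one_iff₀]; right; exact sqrt_two_pi_ge_one
  nlinarith [Real.exp_pos (-v ^ 2 / 2)]

lemma phi_le_one (v : ℝ) : phi v ≤ 1 := by
  have := phi_le_exp v
  have h2 : Real.exp (-v ^ 2 / 2) ≤ 1 := by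
    rw [Real.exp_le_one_iff]
    nlinarith [sq_nonneg v]
  linarith

lemma phi_mom (a : ℝ) : phi a * a ^ 6 ≤ 216 := by
  have h1 := phi_le_exp a
  have h2 := mom a
  nlinarith [pow_nonneg (sq_nonneg a) 3, sq_nonneg (a^3), Real.exp_pos (-a^2/2)]

lemma gauss_weight (c₂ s w : ℝ) (hs : 0 < s) (hsc : s ≤ c₂) :
    phi (w + s) * (1 + w ^ 6) ≤ 6913 + 32 * c₂ ^ 6 := by
  set a := w + s with ha
  have h1 : (a - s) ^ 2 ≤ 2 * a ^ 2 + 2 * s ^ 2 := by nlinarith [sq_nonneg (a + s)]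
  have h2 : w ^ 6 = ((a - s) ^ 2) ^ 3 := by rw [show a - s = w by ring]; ring
  have h3 : ((a - s) ^ 2) ^ 3 ≤ (2 * a ^ 2 + 2 * s ^ 2) ^ 3 :=
    pow_le_pow_left₀ (sq_nonneg _) h1 3
  have h4 : (2 * a ^ 2 + 2 * s ^ 2) ^ 3 ≤ 32 * (a ^ 6 + s ^ 6) := by
    nlinarith [mul_nonneg (sq_nonneg (a ^ 2 - s ^ 2)) (add_nonneg (sq_nonneg a) (sq_nonneg s)),
      sq_nonneg a, sq_nonneg s]
  have hw6 : w ^ 6 ≤ 32 * (a ^ 6 + s ^ 6) := by rw [h2]; exact h3.trans h4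
  have f1 : phi a * w ^ 6 ≤ phi a * (32 * (a ^ 6 + s ^ 6)) :=
    mul_le_mul_of_nonneg_left hw6 (phi_nonneg a)
  have f3 : phi a * a ^ 6 ≤ 216 := phi_mom a
  have hc6 : s ^ 6 ≤ c₂ ^ 6 := pow_le_pow_left₀ hs.le hsc 6
  have f4 : phi a * s ^ 6 ≤ phi a * c₂ ^ 6 :=
    mul_le_mul_of_nonneg_left hc6 (phi_nonneg a)
  have f5 : phi a * c₂ ^ 6 ≤ c₂ ^ 6 :=
    mul_le_of_le_one_left (by positivity) (phi_le_one a)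
  have f6 : phi a ≤ 1 := phi_le_one a
  nlinarith [f1, f3, f4, f5, f6]

end
end S17

/-- pointwise bound on third-order derivatives of `G`. -/
theorem stmt_17 (c₁ c₂ : ℝ) (hc₁ : 0 < c₁) (hc : c₁ ≤ c₂) :
    ∃ C > 0, ∀ τ ∈ Set.Ioc (0 : ℝ) 1, ∀ x k : ℝ, ∀ σ ∈ Set.Icc c₁ c₂,
      |iteratedDeriv 3 (fun x' => Gfun τ x' k σ) x
        - iteratedDeriv 2 (fun x' => Gfun τ x' k σ) x| ≤ C * τ⁻¹ ^ 3 := by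
  refine ⟨121 * (6913 + 32 * c₂ ^ 6) * (1 + c₁⁻¹ ^ 6), by positivity, ?_⟩
  rintro τ ⟨hτ0, hτ1⟩ x k σ ⟨hσ1, hσ2⟩
  have hσ0 : 0 < σ := lt_of_lt_of_le hc₁ hσ1
  rw [S17.G3 hτ0 hσ0, S17.G2 hτ0 hσ0]
  simp only []
  set s := σ * Real.sqrt τ with hsdef
  have hs : 0 < s := S17.s_pos hτ0 hσ0
  set w := S17.Lf s k x with hw
  have hdiff : S17.Ff s k (S17.p4 s⁻¹) x - S17.Ff s k (S17.p3 s⁻¹) x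
      = phi (w + s) * (S17.p4 s⁻¹ w - S17.p3 s⁻¹ w) := by
    rw [← S17.Ephi s k x hs]
    unfold S17.Ff
    ring
  rw [hdiff, abs_mul, abs_of_nonneg (S17.phi_nonneg _)]
  have hR := S17.R_bound (u := s⁻¹) (z := w) (by positivity)
  have hsc : s ≤ c₂ := by
    have h1 : Real.sqrt τ ≤ 1 := Real.sqrt_le_one.mpr hτ1
    nlinarith [Real.sqrt_nonneg τ]
  have hgw := S17.gauss_weight c₂ s w hs hsc
  -- bound `1 + s⁻¹ ^ 6` by `(1 + c₁⁻¹ ^ 6) * τ⁻¹ ^ 3`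
  have hsqt : Real.sqrt τ ^ 6 = τ ^ 3 := by
    rw [show (6:ℕ) = 2 * 3 from rfl, pow_mul, Real.sq_sqrt hτ0.le]
  have hs6 : s ^ 6 = σ ^ 6 * τ ^ 3 := by rw [hsdef, mul_pow, hsqt]
  have hu6 : s⁻¹ ^ 6 = (σ ^ 6)⁻¹ * (τ ^ 3)⁻¹ := by
    rw [inv_pow, hs6, mul_inv]
  have hσ6 : (σ ^ 6)⁻¹ ≤ (c₁ ^ 6)⁻¹ := by
    apply inv_anti₀ (by positivity) (pow_le_pow_left₀ hc₁.le hσ1 6)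
  have htinv : (1:ℝ) ≤ τ⁻¹ := by
    have htpos : 0 < τ⁻¹ := by positivity
    nlinarith [mul_inv_cancel₀ (ne_of_gt hτ0)]
  have ht3 : (1:ℝ) ≤ τ⁻¹ ^ 3 := one_le_pow₀ htinv
  have hτ3inv : (τ ^ 3)⁻¹ = τ⁻¹ ^ 3 := (inv_pow τ 3).symm
  have hBB : 1 + s⁻¹ ^ 6 ≤ (1 + c₁⁻¹ ^ 6) * τ⁻¹ ^ 3 := by
    have h1 : s⁻¹ ^ 6 ≤ (c₁ ^ 6)⁻¹ * (τ ^ 3)⁻¹ := by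
      rw [hu6]
      exact mul_le_mul_of_nonneg_right hσ6 (by positivity)
    rw [hτ3inv, ← inv_pow] at h1
    nlinarith [ht3]
  calc phi (w + s) * |S17.p4 s⁻¹ w - S17.p3 s⁻¹ w|
      ≤ phi (w + s) * (121 * ((1 + s⁻¹ ^ 6) * (1 + w ^ 6))) :=
        mul_le_mul_of_nonneg_left hR (S17.phi_nonneg _)
    _ = 121 * (1 + s⁻¹ ^ 6) * (phi (w + s) * (1 + w ^ 6)) := by ring
    _ ≤ 121 * (1 + s⁻¹ ^ 6) * (6913 + 32 * c₂ ^ 6) := by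
        apply mul_le_mul_of_nonneg_left hgw (by positivity)
    _ = 121 * (6913 + 32 * c₂ ^ 6) * (1 + s⁻¹ ^ 6) := by ring
    _ ≤ 121 * (6913 + 32 * c₂ ^ 6) * ((1 + c₁⁻¹ ^ 6) * τ⁻¹ ^ 3) := by
        apply mul_le_mul_of_nonneg_left hBB (by positivity)
    _ = 121 * (6913 + 32 * c₂ ^ 6) * (1 + c₁⁻¹ ^ 6) * τ⁻¹ ^ 3 := by ring
end
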